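/- arXiv:math/0406190 — 2 statements merged into one kernel-verified Lean document; each statement's English description precedes it below -/
import Mathlib

section
/- The dihedral quandle R_3 of order 3 has trivial second quandle homology: H_2^Q(R_3) = 0. -/
/-- The dihedral quandle operation on `R₃ = ℤ/3ℤ`: `x * y = 2y - x`. -/
def dihedralOp (x y : ZMod 3) : ZMod 3 := 2 * y - x

/-- Rack/quandle 1-chains on `R₃`: the free abelian group on 1-tuples. -/
abbrev QC1 : Type := ZMod 3 →₀ ℤ

/-- 2-chains: the free abelian group on pairs. -/
abbrev QC2 : Type := (ZMod 3 × ZMod 3) →₀ ℤ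

/-- 3-chains: the free abelian group on triples. -/
abbrev QC3 : Type := (ZMod 3 × ZMod 3 × ZMod 3) →₀ ℤ

/-- The standard (rack) boundary `∂₂(x, y) = (x) - (x * y)`, extended linearly. -/
noncomputable def bd2 (c : QC2) : QC1 :=
  Finsupp.sum c fun p a =>
    a • (Finsupp.single p.1 (1 : ℤ) - Finsupp.single (dihedralOp p.1 p.2) (1 : ℤ))

/-- The standard (rack) boundary
`∂₃(x, y, z) = (x, z) - (x * y, z) - (x, y) + (x * z, y * z)`, extended linearly. -/
noncomputable def bd3 (c : QC3) : QC2 :=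
  Finsupp.sum c fun t a =>
    a • (Finsupp.single (t.1, t.2.2) (1 : ℤ)
      - Finsupp.single (dihedralOp t.1 t.2.1, t.2.2) (1 : ℤ)
      - Finsupp.single (t.1, t.2.1) (1 : ℤ)
      + Finsupp.single (dihedralOp t.1 t.2.2, dihedralOp t.2.1 t.2.2) (1 : ℤ))

/-- The projection onto quandle 2-chains, killing degenerate pairs (those with
two adjacent equal entries); composing the rack boundary with this projection
gives the quandle boundary operator on the quotient complex. -/
noncomputable def projQ (c : QC2) : QC2 := Finsupp.filter (fun p => p.1 ≠ p.2) c

lemma bd3_single (t : ZMod 3 × ZMod 3 × ZMod 3) (a : ℤ) :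
    bd3 (Finsupp.single t a) =
      a • (Finsupp.single (t.1, t.2.2) (1 : ℤ)
      - Finsupp.single (dihedralOp t.1 t.2.1, t.2.2) (1 : ℤ)
      - Finsupp.single (t.1, t.2.1) (1 : ℤ)
      + Finsupp.single (dihedralOp t.1 t.2.2, dihedralOp t.2.1 t.2.2) (1 : ℤ)) := by
  unfold bd3
  exact Finsupp.sum_single_index (by simp)

lemma bd3_add (x y : QC3) : bd3 (x + y) = bd3 x + bd3 y := by
  unfold bd3
  exact Finsupp.sum_add_index' (by intro t; simp) (by intro t a b; rw [add_smul])

lemma bd2_eq (c : QC2) : bd2 c = ∑ p : ZMod 3 × ZMod 3,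
    c p • (Finsupp.single p.1 (1 : ℤ) - Finsupp.single (dihedralOp p.1 p.2) (1 : ℤ)) := by
  unfold bd2
  exact Finsupp.sum_fintype _ _ (by intro p; simp)

lemma sum_zmod3 (f : ZMod 3 → ℤ) : ∑ x, f x = f 0 + f 1 + f 2 := by
  show ∑ x : Fin 3, f x = _
  exact Fin.sum_univ_three (fun x : Fin 3 => f x)

/-- The dihedral quandle `R₃` of order 3 has trivial second quandle homology,
`H₂^Q(R₃) = 0`: every quandle 2-cycle (a 2-chain supported on nondegenerate
pairs which is killed by the quandle boundary) is the quandle boundary of a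
3-chain. -/
theorem H2Q_dihedral3_trivial :
    ∀ c : QC2, (∀ p : ZMod 3 × ZMod 3, p.1 = p.2 → c p = 0) → bd2 c = 0 →
      ∃ d : QC3, projQ (bd3 d) = c := by
  intro c h1 h2
  have hx : ∀ x : ZMod 3, ∑ p : ZMod 3 × ZMod 3,
      c p * ((if p.1 = x then (1:ℤ) else 0) - (if dihedralOp p.1 p.2 = x then 1 else 0)) = 0 := by
    intro x
    have h : (bd2 c) x = 0 := by rw [h2]; rfl
    rw [bd2_eq, Finsupp.finset_sum_apply] at h
    simpa only [Finsupp.smul_apply, Finsupp.sub_apply, Finsupp.single_apply,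
      smul_eq_mul] using h
  have E0 := hx 0
  have E1 := hx 1
  rw [Fintype.sum_prod_type] at E0 E1
  simp only [sum_zmod3, dihedralOp] at E0 E1
  simp (config := { decide := true }) at E0 E1
  refine ⟨Finsupp.single ((0:ZMod 3),(1:ZMod 3),(0:ZMod 3)) (-(c (0,1)))
      + Finsupp.single (2,0,1) (c (0,1))
      + Finsupp.single (0,1,2) (c (0,2))
      + Finsupp.single (1,0,2) (c (0,2))
      + Finsupp.single (1,0,1) (-(c (1,0)))
      + Finsupp.single (2,0,2) (-(c (2,0))), ?_⟩
  have h00 := h1 (0,0) rfl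
  have h11 := h1 (1,1) rfl
  have h22 := h1 (2,2) rfl
  have htri : ∀ z : ZMod 3, z = 0 ∨ z = 1 ∨ z = 2 := by decide
  ext p
  obtain ⟨x, y⟩ := p
  rcases htri x with rfl | rfl | rfl <;> rcases htri y with rfl | rfl | rfl <;>
    simp (config := { decide := true }) only [projQ, Finsupp.filter_apply, bd3_add, bd3_single,
      dihedralOp, Finsupp.coe_add, Pi.add_apply, Finsupp.add_apply, Finsupp.sub_apply,
      Finsupp.smul_apply, Finsupp.single_apply, smul_eq_mul, mul_one, mul_zero, ne_eq, if_true, if_false] <;>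
    linarith [E0, E1, h00, h11, h22]
end

section
/- Let the map from polynomials to finite-type data be the evaluation of elementary symmetric functions: the invariant ring (ℚ[x_1,x_2,x_3]/(x_1+x_2+x_3))^{S_3 ⋉ (±1)} (symmetric polynomials invariant under simultaneous sign change) is isomorphic as a graded ring to ℚ[σ_2, σ_3^2], where σ_i is the i-th elementary symmetric polynomial in x_1,x_2,x_3. -/
open MvPolynomial

/-- The elementary symmetric polynomial `σ_k` in `x₁, x₂, x₃` over `ℚ`. -/
noncomputable def sigma (k : ℕ) : MvPolynomial (Fin 3) ℚ := esymm (Fin 3) ℚ k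

/-- The ideal `(σ₁) = (x₁ + x₂ + x₃)`. -/
noncomputable def idealSigma1 : Ideal (MvPolynomial (Fin 3) ℚ) :=
  Ideal.span {sigma 1}

/-- The two generators `σ₂` and `σ₃²`. -/
noncomputable def invGens : Fin 2 → MvPolynomial (Fin 3) ℚ := ![sigma 2, sigma 3 ^ 2]

/-- The simultaneous sign change `x_i ↦ −x_i`. -/
noncomputable def signChange : MvPolynomial (Fin 3) ℚ →ₐ[ℚ] MvPolynomial (Fin 3) ℚ :=
  aeval fun i => -(X i)

/-!
By the fundamental theorem of symmetric polynomials a symmetric `f` is a polynomial in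
`σ₁, σ₂, σ₃`, hence modulo `σ₁` a polynomial `Q(σ₂, σ₃)`. Splitting `Q` by parity in its second
variable gives `f ≡ A(σ₂, σ₃²) + σ₃ B(σ₂, σ₃²)`; the sign change fixes `f`, `A(σ₂, σ₃²)`,
`B(σ₂, σ₃²)` and the ideal `(σ₁)` but negates `σ₃`, so the odd part lies in `(σ₁)` since `2` is
invertible.

For independence, if `Q(σ₂, σ₃) = σ₁ u` then `u` is symmetric, hence a polynomial in the `σᵢ`,
and uniqueness of that expression gives `Q(Y₂, Y₃) = Y₁ U`, so `Q = 0`. Then `σ₂, σ₃²` are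
independent because `X` and `X²` are transcendental.
-/

namespace MvPolynomial

section CommSemiring

variable {ι R A : Type*} [CommSemiring R] [CommSemiring A] [Algebra R A]

theorem map_aeval_of_forall_eq {x : ι → A} {φ : A →ₐ[R] A} (h : ∀ i, φ (x i) = x i)
    (p : MvPolynomial ι R) : φ (aeval x p) = aeval x p := by
  rw [comp_aeval_apply]
  simp only [h]

theorem exists_aeval_eq_aeval_update_sq_add_mul [DecidableEq ι] (x : ι → A) (i : ι)
    (p : MvPolynomial ι R) :
    ∃ q r : MvPolynomial ι R, aeval x p =
      aeval (Function.update x i (x i ^ 2)) q + x i * aeval (Function.update x i (x i ^ 2)) r := by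
  set y := Function.update x i (x i ^ 2)
  induction p using MvPolynomial.induction_on with
  | C c => exact ⟨C c, 0, by simp⟩
  | add p p' hp hp' =>
    obtain ⟨q, r, h⟩ := hp
    obtain ⟨q', r', h'⟩ := hp'
    exact ⟨q + q', r + r', by rw [map_add, h, h', map_add, map_add]; ring⟩
  | mul_X p j hp =>
    obtain ⟨q, r, h⟩ := hp
    by_cases hj : j = i
    · subst hj
      refine ⟨r * X j, q, ?_⟩
      simp only [map_mul, h, aeval_X, y, Function.update_self]
      ring
    · refine ⟨q * X j, r * X j, ?_⟩
      simp only [map_mul, h, aeval_X, y, Function.update_of_ne hj]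
      ring

theorem isHomogeneous_esymm [Fintype ι] (k : ℕ) : (esymm ι R k).IsHomogeneous k := by
  classical
  refine IsHomogeneous.sum _ _ _ fun t ht => ?_
  simpa [(Finset.mem_powersetCard.mp ht).2] using
    IsHomogeneous.prod t (fun i => (X i : MvPolynomial ι R)) (fun _ => 1)
      (fun i _ => isHomogeneous_X R i)

theorem eq_zero_of_X_zero_dvd_rename_succ {n : ℕ} {p : MvPolynomial (Fin n) R}
    (h : X 0 ∣ rename Fin.succ p) : p = 0 := by
  obtain ⟨q, hq⟩ := h
  have := congrArg (aeval (Fin.cons 0 X : Fin (n + 1) → MvPolynomial (Fin n) R)) hq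
  rwa [aeval_rename, Fin.cons_comp_succ, aeval_X_left_apply, map_mul, aeval_X, Fin.cons_zero,
    zero_mul] at this

end CommSemiring

section CommRing

variable {σ R : Type*} [CommRing R]

theorem IsSymmetric.of_mul_left [IsDomain R] {φ ψ : MvPolynomial σ R} (hφ : φ.IsSymmetric)
    (h0 : φ ≠ 0) (h : (φ * ψ).IsSymmetric) : ψ.IsSymmetric := fun e =>
  mul_left_cancel₀ h0 (by rw [← h e, map_mul, hφ e])

variable [Fintype σ]

theorem aeval_neg_X_esymm (k : ℕ) :
    aeval (fun i => -X i) (esymm σ R k) = (-1) ^ k * esymm σ R k := by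
  rw [aeval_esymm_eq_multiset_esymm, esymm_eq_multiset_esymm, ← Multiset.esymm_neg,
    Multiset.map_map]
  rfl

theorem esymm_one_ne_zero [Nonempty σ] [Nontrivial R] : esymm σ R 1 ≠ 0 := by
  intro h
  have := degrees_esymm (σ := σ) (R := R) one_pos Fintype.card_pos
  rw [h, degrees_zero] at this
  exact Finset.univ_nonempty.ne_empty (Finset.val_eq_zero.mp this.symm)

theorem X_zero_dvd_of_aeval_esymm_mem_span [IsDomain R] {n : ℕ} (hn : Fintype.card σ = n + 1)
    {p : MvPolynomial (Fin (n + 1)) R}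
    (hp : aeval (fun i : Fin (n + 1) => esymm σ R (i + 1)) p ∈ Ideal.span {esymm σ R 1}) :
    X 0 ∣ p := by
  have : Nonempty σ := Fintype.card_pos_iff.mp (hn ▸ n.succ_pos)
  obtain ⟨u, hu⟩ := Ideal.mem_span_singleton'.mp hp
  have hu_symm : u.IsSymmetric := by
    refine IsSymmetric.of_mul_left (esymm_isSymmetric σ R 1) esymm_one_ne_zero ?_
    rw [mul_comm, hu, ← esymmAlgHom_apply]
    exact (esymmAlgHom σ R (n + 1) p).2
  obtain ⟨U, hU⟩ := esymmAlgHom_surjective R hn.le ⟨u, hu_symm⟩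
  have hU' : aeval (fun i : Fin (n + 1) => esymm σ R (i + 1)) U = u := by
    rw [← esymmAlgHom_apply, hU]
  refine ⟨U, esymmAlgHom_injective R hn.ge (Subtype.ext ?_)⟩
  rw [esymmAlgHom_apply, esymmAlgHom_apply, map_mul, aeval_X, hU', ← hu]
  simp [mul_comm]

theorem aeval_esymm_sub_aeval_cons_zero_mem_span {n : ℕ} (p : MvPolynomial (Fin (n + 1)) R) :
    aeval (fun i : Fin (n + 1) => esymm σ R (i + 1)) p -
        aeval (fun i : Fin n => esymm σ R (i + 2))
          (aeval (Fin.cons 0 X : Fin (n + 1) → MvPolynomial (Fin n) R) p) ∈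
      Ideal.span {esymm σ R 1} := by
  rw [← Ideal.Quotient.eq_zero_iff_mem, map_sub, sub_eq_zero]
  simp only [← Ideal.Quotient.mkₐ_eq_mk R, comp_aeval_apply]
  congr 2 with i
  refine Fin.cases ?_ (fun j => ?_) i
  · simpa using Ideal.Quotient.eq_zero_iff_mem.mpr (Ideal.mem_span_singleton_self (esymm σ R 1))
  · simp

end CommRing

end MvPolynomial

theorem Ideal.mem_of_sub_mem_of_map_eq_neg {A F : Type*} [CommRing A] [FunLike F A A]
    [RingHomClass F A A] (h2 : IsUnit (2 : A)) {I : Ideal A} {τ : F} (hI : I ≤ I.comap τ)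
    {g s : A} (hg : τ g = g) (hs : τ s = -s) (h : g - s ∈ I) : g ∈ I := by
  have h' : g + s ∈ I := by simpa [hg, hs] using hI h
  rw [← I.unit_mul_mem_iff_mem h2, two_mul]
  simpa using I.add_mem h h'

theorem signChange_sigma (k : ℕ) : signChange (sigma k) = (-1) ^ k * sigma k :=
  aeval_neg_X_esymm k

theorem idealSigma1_le_comap_signChange : idealSigma1 ≤ idealSigma1.comap signChange := by
  rw [idealSigma1, Ideal.span_le, Set.singleton_subset_iff, SetLike.mem_coe, Ideal.mem_comap,
    signChange_sigma, pow_one, neg_one_mul]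
  exact neg_mem (Ideal.mem_span_singleton_self _)

theorem rename_aeval_invGens (g : Equiv.Perm (Fin 3)) (P : MvPolynomial (Fin 2) ℚ) :
    rename g (aeval invGens P) = aeval invGens P :=
  map_aeval_of_forall_eq (Fin.forall_fin_two.mpr <| by simp [invGens, sigma, rename_esymm]) P

theorem signChange_aeval_invGens (P : MvPolynomial (Fin 2) ℚ) :
    signChange (aeval invGens P) = aeval invGens P :=
  map_aeval_of_forall_eq (Fin.forall_fin_two.mpr
    ⟨by simp [invGens, signChange_sigma], by norm_num [invGens, signChange_sigma, mul_pow]⟩) P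

theorem esymm_add_two_eq_sigma_two_three :
    (fun i : Fin 2 => esymm (Fin 3) ℚ (i + 2)) = ![sigma 2, sigma 3] := by
  funext i
  fin_cases i <;> rfl

theorem update_sigma_two_three_eq_invGens :
    Function.update ![sigma 2, sigma 3] 1 (sigma 3 ^ 2) = invGens := by
  funext i
  fin_cases i <;> rfl

theorem eq_zero_of_aeval_sigma_two_three_mem {Q : MvPolynomial (Fin 2) ℚ}
    (hQ : aeval ![sigma 2, sigma 3] Q ∈ idealSigma1) : Q = 0 := by
  refine eq_zero_of_X_zero_dvd_rename_succ
    (X_zero_dvd_of_aeval_esymm_mem_span (n := 2) (Fintype.card_fin 3) ?_)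
  rw [aeval_rename]
  show aeval (fun i : Fin 2 => esymm (Fin 3) ℚ (i + 2)) Q ∈ idealSigma1
  rwa [esymm_add_two_eq_sigma_two_three]

theorem algebraicIndependent_mk_sigma_two_three :
    AlgebraicIndependent ℚ fun i => Ideal.Quotient.mk idealSigma1 (![sigma 2, sigma 3] i) := by
  rw [algebraicIndependent_iff]
  intro p hp
  refine eq_zero_of_aeval_sigma_two_three_mem (Ideal.Quotient.eq_zero_iff_mem.mp ?_)
  rwa [← Ideal.Quotient.mkₐ_eq_mk ℚ, comp_aeval_apply]

theorem algebraicIndependent_mk_invGens :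
    AlgebraicIndependent ℚ fun i => Ideal.Quotient.mk idealSigma1 (invGens i) := by
  convert algebraicIndependent_mk_sigma_two_three.polynomial_aeval_of_transcendental
    (f := ![Polynomial.X, Polynomial.X ^ 2])
    (Fin.forall_fin_two.mpr
      ⟨Polynomial.transcendental_X ℚ, (Polynomial.transcendental_X ℚ).pow two_pos⟩) with i
  fin_cases i <;> simp [invGens]

theorem exists_sub_aeval_invGens_mem_idealSigma1 {f : MvPolynomial (Fin 3) ℚ}
    (hsym : f.IsSymmetric) (hf : signChange f = f) :
    ∃ P : MvPolynomial (Fin 2) ℚ, f - aeval invGens P ∈ idealSigma1 := by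
  obtain ⟨Q, hQ⟩ := esymmAlgHom_surjective ℚ (n := 3) (by simp) ⟨f, hsym⟩
  obtain ⟨A, B, hAB⟩ := exists_aeval_eq_aeval_update_sq_add_mul ![sigma 2, sigma 3] 1
    (aeval (Fin.cons 0 X : Fin 3 → MvPolynomial (Fin 2) ℚ) Q)
  rw [show Function.update ![sigma 2, sigma 3] 1 (![sigma 2, sigma 3] 1 ^ 2) = invGens from
    update_sigma_two_three_eq_invGens] at hAB
  have hmod := aeval_esymm_sub_aeval_cons_zero_mem_span (σ := Fin 3) Q
  rw [← esymmAlgHom_apply, hQ, esymm_add_two_eq_sigma_two_three, hAB] at hmod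
  refine ⟨A, Ideal.mem_of_sub_mem_of_map_eq_neg ?_ idealSigma1_le_comap_signChange
    (g := f - aeval invGens A) (s := sigma 3 * aeval invGens B) ?_ ?_ ?_⟩
  · simpa only [map_ofNat] using
      (IsUnit.mk0 (2 : ℚ) two_ne_zero).map (C : ℚ →+* MvPolynomial (Fin 3) ℚ)
  · rw [map_sub, hf, signChange_aeval_invGens]
  · rw [map_mul, signChange_aeval_invGens, signChange_sigma]
    ring
  · rw [sub_sub]
    exact hmod

/-- The invariant ring `(ℚ[x₁,x₂,x₃]/(x₁+x₂+x₃))^{S₃ ⋉ (±1)}` — the symmetric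
polynomials invariant under simultaneous sign change, in the quotient by
`σ₁ = 0` — is isomorphic as a graded ring to `ℚ[σ₂, σ₃²]`:
(1) the images of `σ₂` and `σ₃²` in the quotient are algebraically independent
    over `ℚ` (so they generate a polynomial ring);
(2) `σ₂` and `σ₃²` are homogeneous of degrees `2` and `6` (gradedness);
(3) every polynomial in `σ₂, σ₃²` is symmetric and invariant under the sign
    change; and
(4) every symmetric, sign-invariant polynomial agrees modulo `(σ₁)` with a
    polynomial in `σ₂` and `σ₃²`. -/
theorem invariant_ring_iso_polynomial_ring :
    (AlgebraicIndependent ℚ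
      fun i : Fin 2 => Ideal.Quotient.mk idealSigma1 (invGens i)) ∧
    ((sigma 2).IsHomogeneous 2 ∧ (sigma 3 ^ 2).IsHomogeneous 6) ∧
    (∀ P : MvPolynomial (Fin 2) ℚ, ∀ g : Equiv.Perm (Fin 3),
      rename g (aeval invGens P) = aeval invGens P) ∧
    (∀ P : MvPolynomial (Fin 2) ℚ,
      signChange (aeval invGens P) = aeval invGens P) ∧
    (∀ f : MvPolynomial (Fin 3) ℚ,
      (∀ g : Equiv.Perm (Fin 3), rename g f = f) →
      signChange f = f →
      ∃ P : MvPolynomial (Fin 2) ℚ, f - aeval invGens P ∈ idealSigma1) :=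
  ⟨algebraicIndependent_mk_invGens,
    ⟨isHomogeneous_esymm 2, (isHomogeneous_esymm 3).pow 2⟩,
    fun P g => rename_aeval_invGens g P, signChange_aeval_invGens,
    fun _ hsym hf => exists_sub_aeval_invGens_mem_idealSigma1 hsym hf⟩
end
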